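/- Let m ≥ 2 be an integer and let v₀ : [0,∞) → ℝ³ be (m+1)-times continuously differentiable (up to the endpoint s = 0) with |v₀(s)| = 1 for all s ≥ 0, satisfying the compatibility condition (A)_{⌊m/2⌋}: v₀(0) = e₃ and v₀(0) × (∂_s^{2k} v₀)(0) = 0 for 1 ≤ k ≤ ⌊m/2⌋. Define the extension ṽ₀ : ℝ → ℝ³ by ṽ₀(s) = v₀(s) for s ≥ 0 and ṽ₀(s) = −v̄₀(−s) for s < 0, where v̄₀ := (v₀¹, v₀², −v₀³). Then ṽ₀ is m-times continuously differentiable on all of ℝ. -/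

import Mathlib

open scoped InnerProductSpace

noncomputable section

/-- ℝ³ with the Euclidean norm and inner product. -/
abbrev E3 := EuclideanSpace ℝ (Fin 3)

/-- The cross product on ℝ³. -/
def cross (a b : E3) : E3 :=
  WithLp.toLp 2 ![a 1 * b 2 - a 2 * b 1, a 2 * b 0 - a 0 * b 2, a 0 * b 1 - a 1 * b 0]

/-- The vector e₃ = (0,0,1). -/
def e₃ : E3 := WithLp.toLp 2 ![0, 0, 1]

/-- The reflection w̄ = (w¹, w², −w³). -/
def bar (w : E3) : E3 := WithLp.toLp 2 ![w 0, w 1, -(w 2)]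

/-!
Both `v₀` and `s ↦ -bar (v₀ (-s))` are `C^m` on their closed half-lines, so `w` is `C^m` as soon
as its one-sided derivatives of order `k ≤ m` agree at `0`. The left one is
`(-1)^k • -bar (∂^k v₀ (0))`, so the even-order derivatives of `v₀` at `0` must be parallel to
`e₃` and the odd-order ones horizontal. The former is the compatibility condition. The latter
follows by induction from `‖v₀‖² = 1`: for odd `k`, every term of the Leibniz expansion of
`∂^k ⟪v₀, v₀⟫` pairs an even-order derivative with an odd-order one, so only the two end terms
`2 v₀³(0) ∂^k v₀³(0)` survive, and `v₀³(0) = ±1` because `v₀(0)` is a vertical unit vector.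
-/

open Set

section Glue

variable {F : Type*} [NormedAddCommGroup F] [NormedSpace ℝ F] {f : ℝ → F} {a : ℝ}

theorem hasDerivAt_of_hasDerivWithinAt_Iic_Ici {f' : F} (hIic : HasDerivWithinAt f f' (Iic a) a)
    (hIci : HasDerivWithinAt f f' (Ici a) a) : HasDerivAt f f' a := by
  simpa [Iic_union_Ici, hasDerivWithinAt_univ] using hIic.union hIci

theorem hasDerivAt_derivWithin_Ici (hIic : DifferentiableWithinAt ℝ f (Iic a) a)
    (hIci : DifferentiableOn ℝ f (Ici a)) (ha : derivWithin f (Iic a) a = derivWithin f (Ici a) a)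
    {x : ℝ} (hx : a ≤ x) : HasDerivAt f (derivWithin f (Ici a) x) x := by
  rcases hx.eq_or_lt with rfl | hax
  · exact hasDerivAt_of_hasDerivWithinAt_Iic_Ici (ha ▸ hIic.hasDerivWithinAt)
      (hIci _ self_mem_Ici).hasDerivWithinAt
  · exact (hIci x hx).hasDerivWithinAt.hasDerivAt (Ici_mem_nhds hax)

theorem hasDerivAt_derivWithin_Iic (hIic : DifferentiableOn ℝ f (Iic a))
    (hIci : DifferentiableWithinAt ℝ f (Ici a) a)
    (ha : derivWithin f (Iic a) a = derivWithin f (Ici a) a)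
    {x : ℝ} (hx : x ≤ a) : HasDerivAt f (derivWithin f (Iic a) x) x := by
  rcases hx.eq_or_lt with rfl | hxa
  · exact hasDerivAt_of_hasDerivWithinAt_Iic_Ici (hIic _ self_mem_Iic).hasDerivWithinAt
      (ha ▸ hIci.hasDerivWithinAt)
  · exact (hIic x hx).hasDerivWithinAt.hasDerivAt (Iic_mem_nhds hxa)

theorem contDiff_of_contDiffOn_Iic_Ici {n : ℕ} (hIic : ContDiffOn ℝ n f (Iic a))
    (hIci : ContDiffOn ℝ n f (Ici a))
    (hmatch : ∀ k ≤ n, iteratedDerivWithin k f (Iic a) a = iteratedDerivWithin k f (Ici a) a) :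
    ContDiff ℝ n f := by
  induction n generalizing f with
  | zero =>
    rw [Nat.cast_zero, contDiff_zero, ← continuousOn_univ, ← Iic_union_Ici (a := a)]
    exact hIic.continuousOn.union_of_isClosed hIci.continuousOn isClosed_Iic isClosed_Ici
  | succ n ih =>
    have hdIic := hIic.differentiableOn (by simp)
    have hdIci := hIci.differentiableOn (by simp)
    have ha : derivWithin f (Iic a) a = derivWithin f (Ici a) a := by
      simpa using hmatch 1 (by omega)
    have hderivIic (x : ℝ) (hx : x ≤ a) :=
      hasDerivAt_derivWithin_Iic hdIic (hdIci a self_mem_Ici) ha hx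
    have hderivIci (x : ℝ) (hx : a ≤ x) :=
      hasDerivAt_derivWithin_Ici (hdIic a self_mem_Iic) hdIci ha hx
    have heqIic : EqOn (deriv f) (derivWithin f (Iic a)) (Iic a) :=
      fun x hx ↦ (hderivIic x hx).deriv
    have heqIci : EqOn (deriv f) (derivWithin f (Ici a)) (Ici a) :=
      fun x hx ↦ (hderivIci x hx).deriv
    rw [Nat.cast_succ, contDiff_succ_iff_deriv]
    refine ⟨fun x ↦ ?_, by simp, ih ?_ ?_ fun k hk ↦ ?_⟩
    · rcases le_total x a with hx | hx
      exacts [(hderivIic x hx).differentiableAt, (hderivIci x hx).differentiableAt]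
    · exact (hIic.derivWithin (uniqueDiffOn_Iic a) le_rfl).congr heqIic
    · exact (hIci.derivWithin (uniqueDiffOn_Ici a) le_rfl).congr heqIci
    · rw [iteratedDerivWithin_congr heqIic self_mem_Iic,
        iteratedDerivWithin_congr heqIci self_mem_Ici, ← iteratedDerivWithin_succ',
        ← iteratedDerivWithin_succ']
      exact hmatch (k + 1) (by omega)

end Glue

section Leibniz

open Finset

variable {𝕜 : Type*} [NontriviallyNormedField 𝕜] {E F G : Type*} [NormedAddCommGroup E]
  [NormedSpace 𝕜 E] [NormedAddCommGroup F] [NormedSpace 𝕜 F] [NormedAddCommGroup G]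
  [NormedSpace 𝕜 G] {s : Set 𝕜} {x : 𝕜}

theorem ContinuousLinearMap.iteratedDerivWithin_comp_left (L : F →L[𝕜] G) {f : 𝕜 → F} {n : ℕ}
    (hf : ContDiffWithinAt 𝕜 n f s x) (hs : UniqueDiffOn 𝕜 s) (hx : x ∈ s) :
    iteratedDerivWithin n (L ∘ f) s x = L (iteratedDerivWithin n f s x) := by
  simp [iteratedDerivWithin_eq_iteratedFDerivWithin,
    L.iteratedFDerivWithin_comp_left hf hs hx le_rfl]

theorem ContinuousLinearMap.iteratedDerivWithin_of_bilinear (B : E →L[𝕜] F →L[𝕜] G)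
    {f : 𝕜 → E} {g : 𝕜 → F} {n : ℕ} (hf : ContDiffOn 𝕜 n f s) (hg : ContDiffOn 𝕜 n g s)
    (hs : UniqueDiffOn 𝕜 s) (hx : x ∈ s) :
    iteratedDerivWithin n (fun t ↦ B (f t) (g t)) s x = ∑ ij ∈ antidiagonal n,
      n.choose ij.1 • B (iteratedDerivWithin ij.1 f s x) (iteratedDerivWithin ij.2 g s x) := by
  induction n generalizing f g with
  | zero => simp
  | succ n ih =>
    have hdf := hf.differentiableOn (by simp)
    have hdg := hg.differentiableOn (by simp)
    have hf' : ContDiffOn 𝕜 n (derivWithin f s) s := hf.derivWithin hs (by simp)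
    have hg' : ContDiffOn 𝕜 n (derivWithin g s) s := hg.derivWithin hs (by simp)
    have hderiv : EqOn (derivWithin (fun t ↦ B (f t) (g t)) s)
        ((fun t ↦ B (f t) (derivWithin g s t)) + fun t ↦ B (derivWithin f s t) (g t)) s :=
      fun t ht ↦ B.derivWithin_of_bilinear (hdf t ht) (hdg t ht)
    have hB {u : 𝕜 → E} {v : 𝕜 → F} (hu : ContDiffOn 𝕜 n u s) (hv : ContDiffOn 𝕜 n v s) :
        ContDiffWithinAt 𝕜 n (fun t ↦ B (u t) (v t)) s x :=
      ((B.contDiff.comp_contDiffOn hu).clm_apply hv) x hx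
    rw [iteratedDerivWithin_succ', iteratedDerivWithin_congr hderiv hx,
      iteratedDerivWithin_add hx hs (hB hf.of_succ hg') (hB hf' hg.of_succ), ih hf.of_succ hg',
      ih hf' hg.of_succ, sum_antidiagonal_choose_succ_nsmul
        (fun i j ↦ B (iteratedDerivWithin i f s x) (iteratedDerivWithin j g s x))]
    congr 1 <;> refine sum_congr rfl fun ij hij ↦ ?_
    · rw [iteratedDerivWithin_succ']
    · rw [iteratedDerivWithin_succ', Nat.choose_symm_of_eq_add (mem_antidiagonal.1 hij).symm]

end Leibniz

section Vertical

def IsVertical (x : E3) : Prop := x 0 = 0 ∧ x 1 = 0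

theorem cross_e₃_eq_zero_iff {x : E3} : cross e₃ x = 0 ↔ IsVertical x := by
  simp [cross, e₃, IsVertical, and_comm]

theorem IsVertical.inner_eq {x : E3} (hx : IsVertical x) (y : E3) : ⟪x, y⟫_ℝ = x 2 * y 2 := by
  simp [PiLp.inner_apply, Fin.sum_univ_three, hx.1, hx.2, mul_comm]

theorem neg_one_pow_smul_neg_bar_eq_self {x : E3} {k : ℕ} (heven : Even k → IsVertical x)
    (hodd : Odd k → x 2 = 0) : (-1 : ℝ) ^ k • -bar x = x := by
  rcases k.even_or_odd with hk | hk
  · obtain ⟨h0, h1⟩ := heven hk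
    ext i; fin_cases i <;> simp [hk.neg_one_pow, bar, h0, h1]
  · ext i; fin_cases i <;> simp [hk.neg_one_pow, bar, hodd hk]

end Vertical

section Reflection

def barCLM : E3 →L[ℝ] E3 :=
  LinearMap.toContinuousLinearMap
    { toFun := bar
      map_add' := fun x y ↦ by ext i; fin_cases i <;> simp [bar]; ring
      map_smul' := fun c x ↦ by ext i; fin_cases i <;> simp [bar] }

variable {v : ℝ → E3}

theorem ContDiffOn.neg_bar_comp_neg {n : WithTop ℕ∞} (hv : ContDiffOn ℝ n v (Ici 0)) :
    ContDiffOn ℝ n (fun s ↦ -bar (v (-s))) (Iic 0) :=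
  (-barCLM).contDiff.comp_contDiffOn (hv.comp contDiff_neg.contDiffOn fun _ hs ↦ by simpa using hs)

theorem iteratedDerivWithin_neg_bar_comp_neg {k : ℕ} (hv : ContDiffOn ℝ k v (Ici 0)) {x : ℝ}
    (hx : x ≤ 0) : iteratedDerivWithin k (fun s ↦ -bar (v (-s))) (Iic 0) x =
      (-1 : ℝ) ^ k • -bar (iteratedDerivWithin k v (Ici 0) (-x)) := by
  rw [iteratedDerivWithin_comp_neg (f := fun t ↦ -bar (v t)), neg_Iic, neg_zero]
  have hx' : -x ∈ Ici (0 : ℝ) := by simpa using hx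
  exact congrArg _ ((-barCLM).iteratedDerivWithin_comp_left (hv _ hx') (uniqueDiffOn_Ici 0) hx')

end Reflection

open Finset in
theorem iteratedDerivWithin_apply_two_eq_zero_of_odd {f : ℝ → E3} {s : Set ℝ} {x : ℝ} {n : ℕ}
    (hf : ContDiffOn ℝ n f s) (hs : UniqueDiffOn ℝ s) (hx : x ∈ s) (hunit : ∀ t ∈ s, ‖f t‖ = 1)
    (heven : ∀ j ≤ n, Even j → IsVertical (iteratedDerivWithin j f s x))
    {k : ℕ} (hkn : k ≤ n) (hk : Odd k) : iteratedDerivWithin k f s x 2 = 0 := by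
  induction k using Nat.strong_induction_on with
  | _ k ih =>
  set u := fun j ↦ iteratedDerivWithin j f s x
  have hu₀ : IsVertical (u 0) := heven 0 (Nat.zero_le n) (by simp)
  have hfk : ContDiffOn ℝ k f s := hf.of_le (by exact_mod_cast hkn)
  have hleibniz := (innerSL ℝ).iteratedDerivWithin_of_bilinear hfk hfk hs hx
  have hconst : iteratedDerivWithin k (fun t ↦ innerSL ℝ (f t) (f t)) s x = 0 := by
    rw [iteratedDerivWithin_congr (g := fun _ ↦ 1) (fun t ht ↦ by simp [hunit t ht]) hx,
      iteratedDerivWithin_const, if_neg hk.pos.ne']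
  have hmid : ∀ ij ∈ antidiagonal k, ij ≠ (0, k) ∧ ij ≠ (k, 0) →
      k.choose ij.1 • ⟪u ij.1, u ij.2⟫_ℝ = 0 := by
    rintro ⟨i, j⟩ hij ⟨hi, hj⟩
    rw [HasAntidiagonal.mem_antidiagonal] at hij
    subst hij
    have hi₀ : i ≠ 0 := by rintro rfl; simp at hi
    have hj₀ : j ≠ 0 := by rintro rfl; simp at hj
    rcases Nat.even_or_odd i with hie | hio
    · have hjo : Odd j := (Nat.odd_add'.1 hk).2 hie
      rw [(heven i (by omega) hie).inner_eq, ih j (by omega) (by omega) hjo, mul_zero, smul_zero]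
    · have hje : Even j := (Nat.odd_add.1 hk).1 hio
      rw [real_inner_comm, (heven j (by omega) hje).inner_eq, ih i (by omega) (by omega) hio,
        mul_zero, smul_zero]
  have hsum : ∑ ij ∈ antidiagonal k, k.choose ij.1 • ⟪u ij.1, u ij.2⟫_ℝ = 0 := by
    rw [← hconst, hleibniz]
    rfl
  rw [sum_eq_add_of_mem (0, k) (k, 0) (by simp) (by simp) (by simp [hk.pos.ne']) hmid] at hsum
  simp only [Nat.choose_zero_right, Nat.choose_self, one_smul] at hsum
  rw [real_inner_comm (u 0) (u k), hu₀.inner_eq] at hsum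
  have hnorm : u 0 2 * u 0 2 = 1 := by
    rw [← hu₀.inner_eq, real_inner_self_eq_norm_sq]
    simp [u, hunit x hx]
  have hprod : u 0 2 * u k 2 = 0 := by linarith
  exact (mul_eq_zero.1 hprod).resolve_left fun h ↦ by simp [h] at hnorm

theorem extension_is_Cm_general
    (m : ℕ)
    (v₀ : ℝ → E3) (w : ℝ → E3)
    (hreg : ContDiffOn ℝ (m + 1) v₀ (Set.Ici 0))
    (hunit : ∀ s : ℝ, 0 ≤ s → ‖v₀ s‖ = 1)
    (hA0 : v₀ 0 = e₃)
    (hA : ∀ k : ℕ, 1 ≤ k → k ≤ m / 2 →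
      cross (v₀ 0) (iteratedDerivWithin (2 * k) v₀ (Set.Ici 0) 0) = 0)
    (hw : ∀ s : ℝ, w s = if 0 ≤ s then v₀ s else -bar (v₀ (-s))) :
    ContDiff ℝ m w := by
  have hv : ContDiffOn ℝ m v₀ (Ici 0) := hreg.of_le (by simp)
  have heven (j : ℕ) (hj : j ≤ m) : Even j → IsVertical (iteratedDerivWithin j v₀ (Ici 0) 0) := by
    rintro ⟨i, rfl⟩
    rcases i.eq_zero_or_pos with rfl | hi
    · simp [IsVertical, hA0, e₃]
    · rw [← cross_e₃_eq_zero_iff, ← hA0, ← two_mul]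
      exact hA i hi (by omega)
  have hIci : EqOn w v₀ (Ici 0) := fun s hs ↦ by simp [hw, mem_Ici.1 hs]
  have hIic : EqOn w (fun s ↦ -bar (v₀ (-s))) (Iic 0) := by
    intro s hs
    rcases (mem_Iic.1 hs).eq_or_lt with rfl | hs
    · ext i; fin_cases i <;> simp [hw, hA0, bar, e₃]
    · simp [hw, not_le.2 hs]
  refine contDiff_of_contDiffOn_Iic_Ici (hv.neg_bar_comp_neg.congr hIic) (hv.congr hIci)
    fun k hk ↦ ?_
  rw [iteratedDerivWithin_congr hIic self_mem_Iic, iteratedDerivWithin_congr hIci self_mem_Ici,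
    iteratedDerivWithin_neg_bar_comp_neg (hv.of_le (by exact_mod_cast hk)) le_rfl, neg_zero]
  exact neg_one_pow_smul_neg_bar_eq_self (heven k hk) (iteratedDerivWithin_apply_two_eq_zero_of_odd
    hv (uniqueDiffOn_Ici 0) self_mem_Ici hunit heven hk)

/-- If `m ≥ 2`, `v₀ : [0,∞) → ℝ³` is `C^{m+1}` up to the endpoint with
`|v₀| = 1`, satisfying the compatibility condition `(A)_{⌊m/2⌋}`, then the odd-type
extension `ṽ₀` (with `ṽ₀(s) = −v̄₀(−s)` for `s < 0`) is `C^m` on all of `ℝ`. -/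
theorem extension_is_Cm
    (m : ℕ) (hm : 2 ≤ m)
    (v₀ : ℝ → E3) (w : ℝ → E3)
    (hreg : ContDiffOn ℝ (m + 1) v₀ (Set.Ici 0))
    (hunit : ∀ s : ℝ, 0 ≤ s → ‖v₀ s‖ = 1)
    (hA0 : v₀ 0 = e₃)
    (hA : ∀ k : ℕ, 1 ≤ k → k ≤ m / 2 →
      cross (v₀ 0) (iteratedDerivWithin (2 * k) v₀ (Set.Ici 0) 0) = 0)
    (hw : ∀ s : ℝ, w s = if 0 ≤ s then v₀ s else -bar (v₀ (-s))) :
    ContDiff ℝ m w :=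
  extension_is_Cm_general m v₀ w hreg hunit hA0 hA hw
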